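/- arXiv:2206.15100 — 2 statements merged into one kernel-verified Lean document; each statement's English description precedes it below -/
import Mathlib

section
/- For any p-strings S and T, S and T are a parameterized match (S ≈ T) if and only if ⟦S⟧ = ⟦T⟧. -/
/-! Common framework: parameterized strings over static alphabet `σ` and
parameter alphabet `π`.  A p-string is a `List (σ ⊕ π)`. -/

variable {σ π : Type*}

instance instInhabSum [Inhabited σ] : Inhabited (σ ⊕ π) := ⟨Sum.inl default⟩

/-- one right rotation: the last character moves to the front -/
def rotR1 {α : Type*} (W : List α) : List α := W.rotate (W.length - 1)

/-- `rotR W i` is the `i`-th right rotation `Rot(W, i)` -/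
def rotR {α : Type*} (W : List α) : ℕ → List α
  | 0 => W
  | i + 1 => rotR1 (rotR W i)

/-- 1-based access `W[i]` (junk default outside the range) -/
def get1 {α : Type*} [Inhabited α] (W : List α) (i : ℕ) : α := W.getD (i - 1) default

/-- the prev-encoding `⟨T⟩`, a list over `σ ⊕ ℕ∞` -/
def prevEnc [DecidableEq σ] [DecidableEq π] (T : List (σ ⊕ π)) : List (σ ⊕ ℕ∞) :=
  (List.range T.length).map fun k =>
    match T[k]? with
    | none => Sum.inr ⊤
    | some (Sum.inl a) => Sum.inl a
    | some (Sum.inr b) =>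
      match ((List.range k).filter fun j => T[j]? = some (Sum.inr b)).max? with
      | none => Sum.inr ⊤
      | some j => Sum.inr ((k - j : ℕ) : ℕ∞)

/-- number of distinct parameter characters occurring in `W` -/
def distinctParams [DecidableEq π] (W : List (σ ⊕ π)) : ℕ :=
  (W.filterMap Sum.getRight?).dedup.length

/-- the encoding `⟦T⟧`, a list over `σ ⊕ ℕ`:  a static character is kept; a
parameter character at (1-based) position `i` is replaced by the number of
distinct parameter characters in `Rot(T, n-i)[1:ℓ]` where `ℓ` is the leftmost
occurrence position of `T[i]` in `Rot(T, n-i)`. -/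
def encodeE [DecidableEq σ] [DecidableEq π] (T : List (σ ⊕ π)) : List (σ ⊕ ℕ) :=
  (List.range T.length).map fun k =>
    match T[k]? with
    | none => Sum.inr 0
    | some (Sum.inl a) => Sum.inl a
    | some (Sum.inr b) =>
      let R := rotR T (T.length - (k + 1))
      Sum.inr (distinctParams (R.take (R.idxOf (Sum.inr b) + 1)))

/-- order on prev-encoding characters: every static character is smaller than
every element of `ℕ∞` (and `ℕ∞` carries its usual order with `∞` on top) -/
def pvlt [LT σ] : (σ ⊕ ℕ∞) → (σ ⊕ ℕ∞) → Prop
  | Sum.inl a, Sum.inl b => a < b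
  | Sum.inl _, Sum.inr _ => True
  | Sum.inr _, Sum.inl _ => False
  | Sum.inr x, Sum.inr y => x < y

/-- `T` is a p-string of length ≥ 1 ending with the static character `d`,
which occurs nowhere else in `T`. -/
def EndsWith [DecidableEq σ] [DecidableEq π] (T : List (σ ⊕ π)) (d : σ) : Prop :=
  1 ≤ T.length ∧ T.getLast? = some (Sum.inl d) ∧ T.count (Sum.inl d) = 1

/-- `RA` represents the parameterized rotation array `RA_T` (0-based indices:
`RA_T[i] = (RA ⟨i-1⟩).val + 1`): the prev-encodings of the rotations are listed
in strictly increasing lexicographic order. -/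
def IsRA [LinearOrder σ] [DecidableEq π] (T : List (σ ⊕ π))
    (RA : Fin T.length ≃ Fin T.length) : Prop :=
  ∀ i j : Fin T.length, i < j →
    List.Lex pvlt (prevEnc (rotR T ((RA i).val + 1))) (prevEnc (rotR T ((RA j).val + 1)))

/-- `LF` represents the LF mapping: `LF_T(i) = j` iff `T_{RA_T[i]+1} = T_{RA_T[j]}`. -/
def IsLF [LinearOrder σ] [DecidableEq π] (T : List (σ ⊕ π))
    (RA LF : Fin T.length ≃ Fin T.length) : Prop :=
  ∀ i : Fin T.length, rotR T ((RA i).val + 2) = rotR T ((RA (LF i)).val + 1)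

/-- the pBWT array `L_T[i] = ⟦T_{RA_T[i]}⟧[n]` -/
def Larr [LinearOrder σ] [DecidableEq π] [Inhabited σ] (T : List (σ ⊕ π))
    (RA : Fin T.length ≃ Fin T.length) (i : Fin T.length) : σ ⊕ ℕ :=
  get1 (encodeE (rotR T ((RA i).val + 1))) T.length

/-- the array `F_T[i] = ⟦T_{RA_T[i]}⟧[1]` -/
def Farr [LinearOrder σ] [DecidableEq π] [Inhabited σ] (T : List (σ ⊕ π))
    (RA : Fin T.length ≃ Fin T.length) (i : Fin T.length) : σ ⊕ ℕ :=
  get1 (encodeE (rotR T ((RA i).val + 1))) 1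

/-- longest common prefix of two lists -/
def lcp {α : Type*} [DecidableEq α] : List α → List α → List α
  | a :: as, b :: bs => if a = b then a :: lcp as bs else []
  | _, _ => []

/-- `lcp∞(X, Y)`: the number of `∞`'s in the longest common prefix of `X` and `Y` -/
def lcpInf [DecidableEq σ] (X Y : List (σ ⊕ ℕ∞)) : ℕ :=
  (lcp X Y).count (Sum.inr ⊤)

/-- the `∞`-LCP array (1-based): `LCP∞_T[i] = lcp∞(⟨T_{RA_T[i]}⟩, ⟨T_{RA_T[i+1]}⟩)`
for `1 ≤ i < n`, and `0` otherwise. -/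
def LCPa [LinearOrder σ] [DecidableEq π] (T : List (σ ⊕ π))
    (RA : Fin T.length ≃ Fin T.length) (i : ℕ) : ℕ :=
  if h : 1 ≤ i ∧ i < T.length then
    lcpInf (prevEnc (rotR T ((RA ⟨i - 1, by omega⟩).val + 1)))
           (prevEnc (rotR T ((RA ⟨i, h.2⟩).val + 1)))
  else 0

/-- parameterized match: a bijection on `σ ⊕ π` fixing all static characters
renames `S` into `T` -/
def PMatch (S T : List (σ ⊕ π)) : Prop :=
  ∃ f : (σ ⊕ π) ≃ (σ ⊕ π), (∀ a : σ, f (Sum.inl a) = Sum.inl a) ∧ S.map f = T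

/-- leftmost (1-based) occurrence position of `c` in `W`, `0` if absent -/
def leftPos [DecidableEq σ] [DecidableEq π] (W : List (σ ⊕ π)) (c : σ ⊕ π) : ℕ :=
  if W.contains c then W.idxOf c + 1 else 0

/-- rightmost (1-based) occurrence position of `c` in `W`, `0` if absent -/
def rightPos [DecidableEq σ] [DecidableEq π] (W : List (σ ⊕ π)) (c : σ ⊕ π) : ℕ :=
  if W.contains c then W.length - W.reverse.idxOf c else 0

/-!
A renaming fixing the static characters preserves every entry of the encoding, since an entry
only counts distinct parameters in a window of a rotation.

Conversely, the encoding commutes with rotation, so one can prove by induction on `m`, for all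
pairs of strings with equal encodings at once, that their prefixes of length `m` p-match. In the
step from `x :: A` and `y :: B`, the rotations `A ++ [x]` and `B ++ [y]` also have equal
encodings, so their prefixes of length `m` p-match; and the head entry of a parameter `x` is its
rank, in order of first occurrence, in `A ++ [x]`. Distinct parameter counts strictly increase
at a first occurrence and agree on these prefixes, hence `x` first occurs within the first `m`
characters of `A` exactly where `y` does in `B`: this is what is needed to extend the renaming
from `A` to `x :: A`.
-/
-- `idxOf` in `encodeE` uses the derived `BEq` on `Sum`, which core does not make lawful.
instance [DecidableEq σ] [DecidableEq π] : LawfulBEq (σ ⊕ π) where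
  eq_of_beq {x y} h := by
    rcases x with a | a <;> rcases y with b | b <;> first
      | cases h
      | exact congrArg _ (eq_of_beq (α := σ) h)
      | exact congrArg _ (eq_of_beq (α := π) h)
  rfl {x} := by rcases x with a | a <;> exact beq_self_eq_true a

section IdxOf

variable {α β : Type*} [BEq α] [LawfulBEq α] [BEq β] [LawfulBEq β]

theorem List.idxOf_take (l : List α) (x : α) (m : ℕ) :
    (l.take m).idxOf x = min (l.idxOf x) m := by
  induction l generalizing m with
  | nil => simp
  | cons y l ih =>
    cases m with
    | zero => simp
    | succ m => by_cases h : y = x <;> simp [h, ih]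

theorem List.idxOf_map_of_injective {f : α → β} (hf : Function.Injective f) (l : List α)
    (x : α) : (l.map f).idxOf (f x) = l.idxOf x := by
  induction l with
  | nil => simp
  | cons y l ih => by_cases h : y = x <;> simp [ih, h, hf.ne]

theorem List.notMem_take_idxOf (l : List α) (x : α) : x ∉ l.take (l.idxOf x) := by
  intro h
  have hlt := List.idxOf_lt_length_iff.2 h
  rw [List.idxOf_take, min_self, List.length_take] at hlt
  omega

end IdxOf

section DistinctParams

variable [DecidableEq π]

theorem distinctParams_eq_card_filter [DecidableEq σ] (W : List (σ ⊕ π)) :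
    distinctParams W = (W.toFinset.filter (·.isRight)).card := by
  rw [distinctParams, ← List.card_toFinset,
    ← Finset.card_image_of_injective _ (Sum.inr_injective (α := σ))]
  congr 1
  ext x
  cases x <;> simp

theorem distinctParams_mono {V W : List (σ ⊕ π)} (h : V.Sublist W) :
    distinctParams V ≤ distinctParams W := by
  rw [distinctParams, distinctParams, ← List.card_toFinset, ← List.card_toFinset]
  exact Finset.card_le_card fun b hb => by
    simpa using (h.filterMap _).subset (List.mem_toFinset.1 hb)

end DistinctParams

section PMatch

theorem PMatch.symm {S T : List (σ ⊕ π)} (h : PMatch S T) : PMatch T S := by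
  obtain ⟨f, hf, rfl⟩ := h
  exact ⟨f.symm, fun a => f.symm_apply_eq.2 (hf a).symm, by simp [List.map_map]⟩

theorem PMatch.take {S T : List (σ ⊕ π)} (h : PMatch S T) (m : ℕ) :
    PMatch (S.take m) (T.take m) := by
  obtain ⟨f, hf, rfl⟩ := h
  exact ⟨f, hf, List.map_take ..⟩

theorem isRight_apply_of_forall_inl {f : (σ ⊕ π) ≃ (σ ⊕ π)}
    (hf : ∀ a : σ, f (Sum.inl a) = Sum.inl a) (x : σ ⊕ π) : (f x).isRight = x.isRight := by
  rcases x with a | b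
  · simp [hf a]
  · cases hfb : f (Sum.inr b) with
    | inl a => exact absurd (f.injective (hfb.trans (hf a).symm)) Sum.inr_ne_inl
    | inr c => rfl

theorem PMatch.cons_inl {S T : List (σ ⊕ π)} (h : PMatch S T) (a : σ) :
    PMatch (Sum.inl a :: S) (Sum.inl a :: T) := by
  obtain ⟨f, hf, rfl⟩ := h
  exact ⟨f, hf, by simp [hf]⟩

variable [DecidableEq σ] [DecidableEq π]

theorem PMatch.distinctParams_eq {S T : List (σ ⊕ π)} (h : PMatch S T) :
    distinctParams S = distinctParams T := by
  obtain ⟨f, hf, rfl⟩ := h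
  have himage : (S.map f).toFinset = S.toFinset.image f := by ext; simp
  rw [distinctParams_eq_card_filter, distinctParams_eq_card_filter, himage,
    Finset.filter_image, Finset.card_image_of_injective _ f.injective]
  simp [isRight_apply_of_forall_inl hf]

theorem PMatch.cons_inr {S T : List (σ ⊕ π)} (h : PMatch S T) {b c : π}
    (hidx : S.idxOf (Sum.inr b) = T.idxOf (Sum.inr c)) :
    PMatch (Sum.inr b :: S) (Sum.inr c :: T) := by
  obtain ⟨f, hf, rfl⟩ := h
  have hmem : Sum.inr b ∈ S ↔ Sum.inr c ∈ S.map f := by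
    rw [← List.idxOf_lt_length_iff, ← List.idxOf_lt_length_iff, hidx, List.length_map]
  have hfb : Sum.inr b ∈ S → f (Sum.inr b) = Sum.inr c := fun hb => by
    have hlt := List.idxOf_lt_length_iff.2 (hmem.1 hb)
    simpa only [← hidx, List.getElem_map, List.getElem_idxOf] using List.getElem_idxOf hlt
  refine ⟨f.trans (Equiv.swap (f (Sum.inr b)) (Sum.inr c)), fun a => ?_, ?_⟩
  · have h1 : f (Sum.inl a) ≠ f (Sum.inr b) := f.injective.ne Sum.inl_ne_inr
    rw [Equiv.trans_apply, Equiv.swap_apply_of_ne_of_ne h1 (by simp [hf]), hf]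
  · by_cases hbc : f (Sum.inr b) = Sum.inr c
    · simp [hbc]
    · have hb : Sum.inr b ∉ S := mt hfb hbc
      refine congrArg₂ _ (by simp) (List.map_congr_left fun z hz => ?_)
      refine Equiv.swap_apply_of_ne_of_ne (f.injective.ne (ne_of_mem_of_not_mem hz hb)) ?_
      exact fun hzc => hb (hmem.2 (hzc ▸ List.mem_map_of_mem hz))

end PMatch

theorem length_rotR {α : Type*} (W : List α) (i : ℕ) : (rotR W i).length = W.length := by
  induction i with
  | zero => rfl
  | succ i ih => simp [rotR, rotR1, ih]

theorem rotR1_rotate_one {α : Type*} (W : List α) : (rotR1 W).rotate 1 = W := by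
  cases W with
  | nil => rfl
  | cons x W => rw [rotR1, List.rotate_rotate, List.length_cons, Nat.add_sub_cancel,
      ← List.length_cons (a := x), List.rotate_length]

theorem rotR_rotate {α : Type*} (W : List α) (i : ℕ) : (rotR W i).rotate i = W := by
  induction i with
  | zero => exact List.rotate_zero W
  | succ i ih => rw [rotR, Nat.add_comm, ← List.rotate_rotate, rotR1_rotate_one, ih]

theorem rotR_eq_rotate {α : Type*} {W : List α} {i j : ℕ} (h : i + j = W.length) :
    rotR W i = W.rotate j := by
  calc rotR W i = (rotR W i).rotate (i + j) := by rw [h, ← length_rotR W i, List.rotate_length]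
    _ = W.rotate j := by rw [← List.rotate_rotate, rotR_rotate]

section Encoding

variable [DecidableEq σ] [DecidableEq π]

def paramRank (W : List (σ ⊕ π)) (x : σ ⊕ π) : ℕ :=
  distinctParams (W.take (W.idxOf x + 1))

def encodeChar (W : List (σ ⊕ π)) : σ ⊕ π → σ ⊕ ℕ
  | Sum.inl a => Sum.inl a
  | Sum.inr b => Sum.inr (paramRank W (Sum.inr b))

theorem distinctParams_take_lt_paramRank {W : List (σ ⊕ π)} {b : π} (hb : Sum.inr b ∈ W)
    {m : ℕ} (hm : m ≤ W.idxOf (Sum.inr b)) :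
    distinctParams (W.take m) < paramRank W (Sum.inr b) := by
  have hsplit :
      W.take (W.idxOf (Sum.inr b) + 1) = W.take (W.idxOf (Sum.inr b)) ++ [Sum.inr b] := by
    rw [List.take_add_one, List.getElem?_idxOf hb, Option.toList_some]
  have hnew := List.notMem_take_idxOf W (Sum.inr b)
  calc distinctParams (W.take m)
      ≤ distinctParams (W.take (W.idxOf (Sum.inr b))) :=
        distinctParams_mono (List.take_sublist_take_left hm)
    _ < paramRank W (Sum.inr b) := by
        rw [paramRank, hsplit, distinctParams_eq_card_filter, distinctParams_eq_card_filter,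
          List.toFinset_append]
        simp [Finset.filter_insert, Finset.card_insert_of_notMem, hnew]

theorem encodeE_length (T : List (σ ⊕ π)) : (encodeE T).length = T.length := by
  simp [encodeE]

theorem encodeE_getElem (T : List (σ ⊕ π)) {k : ℕ} (hk : k < (encodeE T).length) :
    (encodeE T)[k] = encodeChar (T.rotate (k + 1)) (T[k]'(by simpa [encodeE_length] using hk)) := by
  have hk' : k < T.length := by simpa [encodeE_length] using hk
  have hrot : rotR T (T.length - (k + 1)) = T.rotate (k + 1) := rotR_eq_rotate (by omega)
  simp only [encodeE, List.getElem_map, List.getElem_range, List.getElem?_eq_getElem hk']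
  rcases T[k] with a | b
  · rfl
  · simp [encodeChar, paramRank, hrot]

theorem encodeE_rotate (T : List (σ ⊕ π)) (j : ℕ) :
    encodeE (T.rotate j) = (encodeE T).rotate j := by
  refine List.ext_getElem (by simp [encodeE_length]) fun k hk hk' => ?_
  rw [encodeE_getElem, List.getElem_rotate, List.getElem_rotate, encodeE_getElem]
  simp only [encodeE_length, List.rotate_rotate]
  congr 1
  rw [← List.rotate_mod T (_ % _ + 1), Nat.mod_add_mod, List.rotate_mod]
  ring_nf

theorem length_eq_of_encodeE_eq {S T : List (σ ⊕ π)} (h : encodeE S = encodeE T) :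
    S.length = T.length := by
  rw [← encodeE_length, h, encodeE_length]

theorem encodeChar_map {f : (σ ⊕ π) ≃ (σ ⊕ π)} (hf : ∀ a : σ, f (Sum.inl a) = Sum.inl a)
    (W : List (σ ⊕ π)) (x : σ ⊕ π) : encodeChar (W.map f) (f x) = encodeChar W x := by
  rcases x with a | b
  · rw [hf]; rfl
  · obtain ⟨c, hc⟩ : ∃ c, f (Sum.inr b) = Sum.inr c :=
      Sum.isRight_iff.1 ((isRight_apply_of_forall_inl hf _).trans rfl)
    have hrank : paramRank (W.map f) (f (Sum.inr b)) = paramRank W (Sum.inr b) := by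
      rw [paramRank, paramRank, List.idxOf_map_of_injective f.injective, ← List.map_take]
      exact (PMatch.distinctParams_eq ⟨f, hf, rfl⟩).symm
    rw [hc] at hrank ⊢
    simp only [encodeChar, hrank]

theorem PMatch.encodeE_eq {S T : List (σ ⊕ π)} (h : PMatch S T) : encodeE S = encodeE T := by
  obtain ⟨f, hf, rfl⟩ := h
  refine List.ext_getElem (by simp [encodeE_length]) fun k hk hk' => ?_
  rw [encodeE_getElem, encodeE_getElem, List.getElem_map, ← List.map_rotate, encodeChar_map hf]

theorem idxOf_le_of_paramRank_eq {W W' : List (σ ⊕ π)} {m : ℕ}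
    (h : PMatch (W.take m) (W'.take m)) {b c : π} (hc : Sum.inr c ∈ W')
    (hrank : paramRank W (Sum.inr b) = paramRank W' (Sum.inr c))
    (hm : W.idxOf (Sum.inr b) < m) : W'.idxOf (Sum.inr c) ≤ W.idxOf (Sum.inr b) := by
  by_contra! hlt
  have hprefix := h.take (W.idxOf (Sum.inr b) + 1)
  rw [List.take_take, List.take_take, min_eq_left hm] at hprefix
  have hcount := distinctParams_take_lt_paramRank hc hlt
  rw [← hprefix.distinctParams_eq, ← paramRank, hrank] at hcount
  exact lt_irrefl _ hcount

theorem idxOf_take_eq_of_paramRank_eq {W W' : List (σ ⊕ π)} {m : ℕ}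
    (h : PMatch (W.take m) (W'.take m)) {b c : π} (hb : Sum.inr b ∈ W) (hc : Sum.inr c ∈ W')
    (hrank : paramRank W (Sum.inr b) = paramRank W' (Sum.inr c)) :
    (W.take m).idxOf (Sum.inr b) = (W'.take m).idxOf (Sum.inr c) := by
  have hle := idxOf_le_of_paramRank_eq h hc hrank
  have hge := idxOf_le_of_paramRank_eq h.symm hb hrank.symm
  rw [List.idxOf_take, List.idxOf_take]
  omega

theorem PMatch.take_of_encodeE_eq {m : ℕ} :
    ∀ {S T : List (σ ⊕ π)}, encodeE S = encodeE T → m ≤ S.length →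
      PMatch (S.take m) (T.take m) := by
  induction m with
  | zero => exact fun _ _ => ⟨Equiv.refl _, fun _ => rfl, rfl⟩
  | succ m ih =>
    intro S T h hm
    have hlen := length_eq_of_encodeE_eq h
    obtain ⟨x, A, rfl⟩ := List.exists_cons_of_length_pos (by omega : 0 < S.length)
    obtain ⟨y, B, rfl⟩ := List.exists_cons_of_length_pos (by omega : 0 < T.length)
    have hAB : A.length = B.length := by simpa using hlen
    have hmA : m ≤ A.length := by simpa using hm
    have hrot : encodeE (A ++ [x]) = encodeE (B ++ [y]) := by
      have hrot1 := encodeE_rotate (x :: A) 1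
      rwa [h, ← encodeE_rotate, List.rotate_cons_succ, List.rotate_cons_succ, List.rotate_zero,
        List.rotate_zero] at hrot1
    have hwindow := ih hrot (by rw [List.length_append]; omega)
    have hhead : encodeChar (A ++ [x]) x = encodeChar (B ++ [y]) y := by
      have h0 := List.getElem_of_eq h (by simp [encodeE_length] : 0 < (encodeE (x :: A)).length)
      rw [encodeE_getElem, encodeE_getElem] at h0
      simpa using h0
    have htake : ∀ {L : List (σ ⊕ π)} {z}, m ≤ L.length → (L ++ [z]).take m = L.take m :=
      fun hL => List.take_append_of_le_length hL
    rw [List.take_succ_cons, List.take_succ_cons]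
    rcases x with a | b <;> rcases y with a' | c <;>
      simp only [encodeChar, Sum.inl.injEq, Sum.inr.injEq, reduceCtorEq] at hhead
    · rw [htake hmA, htake (hAB ▸ hmA)] at hwindow
      exact hhead ▸ hwindow.cons_inl a
    · have hidx := idxOf_take_eq_of_paramRank_eq hwindow (by simp) (by simp) hhead
      rw [htake hmA, htake (hAB ▸ hmA)] at hwindow hidx
      exact hwindow.cons_inr hidx

end Encoding

/-- For any p-strings `S` and `T`, `S ≈ T` iff `⟦S⟧ = ⟦T⟧`. -/
theorem pmatch_iff_encode_eq [DecidableEq σ] [DecidableEq π]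
    (S T : List (σ ⊕ π)) :
    PMatch S T ↔ encodeE S = encodeE T := by
  refine ⟨PMatch.encodeE_eq, fun h => ?_⟩
  have hprefix := PMatch.take_of_encodeE_eq h (le_refl S.length)
  rwa [List.take_length, length_eq_of_encodeE_eq h, List.take_length] at hprefix
end

section
/- Let T be a p-string of length n ending with a special static character $ that occurs nowhere else in T. For every 1 ≤ i ≤ n, letting x = L_T[i] and j = LF_T(i), it holds that F_T[j] = x and the number of occurrences of x in F_T[1:j] equals the number of occurrences of x in L_T[1:i]; i.e., LF_T(i) is the position of the (|L_T[1:i]|_x)-th occurrence of x in F_T, and symmetrically, letting y = F_T[j], LF_T⁻¹(j) is the position of the (|F_T[1:j]|_y)-th occurrence of y in L_T. -/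
/-! Common framework: parameterized strings over static alphabet `σ` and
parameter alphabet `π`.  A p-string is a `List (σ ⊕ π)`. -/

variable {σ π : Type*}

/-!
Write a rotation as `W = U ++ [c]`, so that `rotR1 W = c :: U`. The prev-encoding `⟨c :: U⟩`
depends only on `⟨U⟩` and on the last character `x = ⟦W⟧[n]`: a static `c` is just prepended,
while a parameter `c` with `x = m` becomes `∞`, and its first occurrence in `U`, which is the
`m`-th `∞` of `⟨U⟩`, turns into the back-reference `k + 1` at position `k`. That value exceeds
every finite entry at position `k`, so the resulting map `rotateEnc x` is monotone for the
lexicographic order. Since `⟨U⟩ ≤ ⟨U'⟩` whenever `⟨U ++ [c]⟩ < ⟨U' ++ [c']⟩`, the LF mapping is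
strictly increasing on each set of rows sharing the same `L`-character, and `F[LF i] = L[i]`
because both read the last character of the same rotation. So LF matches the occurrences of a
character in `L` with those in `F`, in order.
-/

/-- `List.idxOf` in `encodeE` uses the derived `BEq` on sums, which core does not make lawful. -/
instance Sum.instLawfulBEq {α β : Type*} [BEq α] [LawfulBEq α] [BEq β] [LawfulBEq β] :
    LawfulBEq (α ⊕ β) where
  eq_of_beq {a b} h := by
    cases a <;> cases b
    all_goals first | cases h | exact congrArg _ (eq_of_beq h)
  rfl {a} := by
    cases a
    · exact beq_self_eq_true (α := α) _
    · exact beq_self_eq_true (α := β) _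

namespace List
variable {α : Type*}

section idxOf
variable [BEq α] [LawfulBEq α]

theorem idxOf_eq_iff {l : List α} {a : α} {k : ℕ} (hk : k < l.length) :
    l.idxOf a = k ↔ l[k] = a ∧ a ∉ l.take k := by
  rw [idxOf, findIdx_eq hk, mem_take_iff_getElem]
  simp only [beq_iff_eq, beq_eq_false_iff_ne, ne_eq, not_exists]
  constructor
  · rintro ⟨hka, hlt⟩
    exact ⟨hka, fun j hj => hlt j (by omega)⟩
  · rintro ⟨hka, hlt⟩
    exact ⟨hka, fun j hj => hlt j (by omega)⟩

theorem not_mem_take_idxOf (l : List α) (a : α) : a ∉ l.take (l.idxOf a) := by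
  by_cases ha : a ∈ l
  · exact ((idxOf_eq_iff (idxOf_lt_length_of_mem ha)).mp rfl).2
  · exact fun h => ha (mem_of_mem_take h)

theorem take_idxOf_add_one_append_singleton (l : List α) (a : α) :
    (l ++ [a]).take (l.idxOf a + 1) = l.take (l.idxOf a) ++ [a] := by
  by_cases ha : a ∈ l
  · have hlt := idxOf_lt_length_of_mem ha
    rw [take_append_of_le_length hlt, take_add_one, getElem?_eq_getElem hlt, getElem_idxOf hlt]
    rfl
  · rw [idxOf_eq_length ha, take_of_length_le (by simp), take_length]

theorem count_take_lt_count_take {l : List α} {a : α} {k j : ℕ} (hk : l[k]? = some a)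
    (hkj : k < j) : (l.take k).count a < (l.take j).count a := by
  have hsucc : (l.take (k + 1)).count a = (l.take k).count a + 1 := by
    simp [take_add_one, hk]
  have hmono : (l.take (k + 1)).count a ≤ (l.take j).count a :=
    (take_sublist_take_left hkj).count_le a
  omega

theorem getElem?_eq_some_and_count_take_eq_iff {l : List α} {a : α} {j k : ℕ}
    (hj : j < l.length → l[j]? = some a) (hk : k < l.length) :
    l[k]? = some a ∧ (l.take k).count a = (l.take j).count a ↔ k = j := by
  constructor
  · rintro ⟨hka, hcount⟩
    by_contra hne
    rcases Nat.lt_or_gt_of_ne hne with hlt | hlt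
    · exact (count_take_lt_count_take hka hlt).ne hcount
    · exact (count_take_lt_count_take (hj (by omega)) hlt).ne hcount.symm
  · rintro rfl
    exact ⟨hj hk, rfl⟩

end idxOf

theorem mem_take_iff_exists_getElem? {l : List α} {a : α} {k : ℕ} :
    a ∈ l.take k ↔ ∃ j < k, l[j]? = some a := by
  rw [mem_take_iff_getElem]
  constructor
  · rintro ⟨j, hj, rfl⟩
    exact ⟨j, by omega, getElem?_eq_getElem (by omega)⟩
  · rintro ⟨j, hj, hja⟩
    obtain ⟨hjl, rfl⟩ := getElem?_eq_some_iff.mp hja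
    exact ⟨j, by omega, rfl⟩

section lastOccBefore
variable [DecidableEq α]

def lastOccBefore (l : List α) (k : ℕ) (a : α) : Option ℕ :=
  ((range k).filter fun j => l[j]? = some a).max?

theorem lastOccBefore_eq_none_iff {l : List α} {k : ℕ} {a : α} :
    l.lastOccBefore k a = none ↔ a ∉ l.take k := by
  simp [lastOccBefore, filter_eq_nil_iff, mem_take_iff_exists_getElem?]

theorem lastOccBefore_take {l : List α} {k n : ℕ} (h : k ≤ n) (a : α) :
    (l.take n).lastOccBefore k a = l.lastOccBefore k a := by
  unfold lastOccBefore
  congr 1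
  refine filter_congr fun j hj => ?_
  rw [getElem?_take_of_lt (by simp at hj; omega)]

theorem lastOccBefore_cons_succ (c : α) (l : List α) (k : ℕ) (a : α) :
    (c :: l).lastOccBefore (k + 1) a =
      ((l.lastOccBefore k a).map (· + 1)).or (if c = a then some 0 else none) := by
  have hmem : ∀ t, t ∈ (range (k + 1)).filter (fun j => (c :: l)[j]? = some a) ↔
      (t = 0 ∧ c = a) ∨ ∃ s ∈ (range k).filter (fun j => l[j]? = some a), t = s + 1 := by
    intro t
    cases t <;> simp
  cases h : l.lastOccBefore k a with
  | none =>
    have hnil : (range k).filter (fun j => l[j]? = some a) = [] := max?_eq_none_iff.mp h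
    by_cases hca : c = a
    · simp only [Option.map_none, Option.none_or, if_pos hca]
      refine max?_eq_some_iff.mpr ⟨(hmem 0).mpr (Or.inl ⟨rfl, hca⟩), fun t ht => ?_⟩
      rcases (hmem t).mp ht with ⟨rfl, -⟩ | ⟨s, hs, -⟩
      · rfl
      · simp [hnil] at hs
    · simp only [Option.map_none, Option.none_or, if_neg hca]
      refine max?_eq_none_iff.mpr (eq_nil_iff_forall_not_mem.mpr fun t ht => ?_)
      rcases (hmem t).mp ht with ⟨-, hca'⟩ | ⟨s, hs, -⟩
      · exact hca hca'
      · simp [hnil] at hs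
  | some j =>
    obtain ⟨hj, hjmax⟩ := max?_eq_some_iff.mp h
    simp only [Option.map_some, Option.some_or]
    refine max?_eq_some_iff.mpr ⟨(hmem _).mpr (Or.inr ⟨j, hj, rfl⟩), fun t ht => ?_⟩
    rcases (hmem t).mp ht with ⟨rfl, -⟩ | ⟨s, hs, rfl⟩
    · omega
    · exact Nat.succ_le_succ (hjmax s hs)

end lastOccBefore

theorem Lex.lex_or_eq_of_append_singleton {r : α → α → Prop} :
    ∀ {l₁ l₂ : List α} {a b : α}, l₁.length = l₂.length →
      Lex r (l₁ ++ [a]) (l₂ ++ [b]) → Lex r l₁ l₂ ∨ l₁ = l₂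
  | [], [], _, _, _, _ => Or.inr rfl
  | _ :: _, _ :: _, _, _, _, .rel h => Or.inl (.rel h)
  | _ :: _, _ :: _, _, _, hlen, .cons h =>
    (lex_or_eq_of_append_singleton (by simpa using hlen) h).imp .cons (congrArg _)

end List

instance pvlt.instAsymm [Preorder σ] : Std.Asymm (pvlt (σ := σ)) where
  asymm x y := by
    cases x <;> cases y <;> simp only [pvlt] <;> first | exact fun h h' => lt_asymm h h' | simp

section Rotations
variable {α : Type*}

theorem rotR1_append_singleton (l : List α) (a : α) : rotR1 (l ++ [a]) = a :: l := by
  simp [rotR1]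

theorem rotR_eq_rotate_s6 (l : List α) (k : ℕ) : rotR l k = l.rotate (k * (l.length - 1)) := by
  induction k with
  | zero => simp [rotR]
  | succ k ih =>
    simp only [rotR, rotR1, ih, List.rotate_rotate, List.length_rotate]
    ring_nf

@[simp]
theorem length_rotR_s6 (l : List α) (k : ℕ) : (rotR l k).length = l.length := by
  simp [rotR_eq_rotate_s6]

theorem rotR_length (l : List α) : rotR l l.length = l := by
  rw [rotR_eq_rotate_s6, List.rotate_length_mul]

theorem rotR_succ' (l : List α) (k : ℕ) : rotR l (k + 1) = rotR (rotR1 l) k := by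
  induction k with
  | zero => rfl
  | succ k ih => exact congrArg rotR1 ih

theorem rotR_cons_length (a : α) (l : List α) : rotR (a :: l) l.length = l ++ [a] := by
  rw [← rotR1_append_singleton, ← rotR_succ']
  simpa using rotR_length (l ++ [a])

end Rotations

section DistinctParams
variable [DecidableEq π]

theorem distinctParams_append_inl (T : List (σ ⊕ π)) (a : σ) :
    distinctParams (T ++ [Sum.inl a]) = distinctParams T := by
  simp only [distinctParams, List.filterMap_append]
  rw [show [Sum.inl a].filterMap Sum.getRight? = ([] : List π) from rfl, List.append_nil]

theorem distinctParams_append_inr_of_mem {T : List (σ ⊕ π)} {b : π} (h : Sum.inr b ∈ T) :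
    distinctParams (T ++ [Sum.inr b]) = distinctParams T := by
  have hb : b ∈ T.filterMap Sum.getRight? := by simpa using h
  simp [distinctParams, ← List.card_toFinset, hb]

theorem distinctParams_append_inr_of_not_mem {T : List (σ ⊕ π)} {b : π} (h : Sum.inr b ∉ T) :
    distinctParams (T ++ [Sum.inr b]) = distinctParams T + 1 := by
  have hb : b ∉ T.filterMap Sum.getRight? := by simpa using h
  simp [distinctParams, ← List.card_toFinset, hb]

end DistinctParams

section PrevEnc
variable [DecidableEq σ] [DecidableEq π]

def prevEncAt (T : List (σ ⊕ π)) (k : ℕ) : σ ⊕ ℕ∞ :=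
  match T[k]? with
  | none => Sum.inr ⊤
  | some (Sum.inl a) => Sum.inl a
  | some (Sum.inr b) =>
    match T.lastOccBefore k (Sum.inr b) with
    | none => Sum.inr ⊤
    | some j => Sum.inr ((k - j : ℕ) : ℕ∞)

theorem prevEnc_eq_map (T : List (σ ⊕ π)) :
    prevEnc T = (List.range T.length).map (prevEncAt T) := rfl

@[simp]
theorem length_prevEnc (T : List (σ ⊕ π)) : (prevEnc T).length = T.length := by
  simp [prevEnc_eq_map]

@[simp]
theorem getElem_prevEnc (T : List (σ ⊕ π)) {k : ℕ} (hk : k < (prevEnc T).length) :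
    (prevEnc T)[k] = prevEncAt T k := by
  simp [prevEnc_eq_map]

theorem getElem?_prevEnc (T : List (σ ⊕ π)) {k : ℕ} (hk : k < T.length) :
    (prevEnc T)[k]? = some (prevEncAt T k) := by
  simp [prevEnc_eq_map, hk]

theorem prevEncAt_take {T : List (σ ⊕ π)} {k n : ℕ} (hk : k < n) :
    prevEncAt (T.take n) k = prevEncAt T k := by
  simp only [prevEncAt, List.getElem?_take_of_lt hk, List.lastOccBefore_take hk.le]

theorem prevEnc_take (T : List (σ ⊕ π)) (n : ℕ) : prevEnc (T.take n) = (prevEnc T).take n := by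
  refine List.ext_getElem (by simp) fun k hk _ => ?_
  simp only [length_prevEnc, List.length_take] at hk
  simp [prevEncAt_take (show k < n by omega)]

theorem prevEnc_append_singleton (T : List (σ ⊕ π)) (c : σ ⊕ π) :
    prevEnc (T ++ [c]) = prevEnc T ++ [prevEncAt (T ++ [c]) T.length] := by
  simp only [prevEnc_eq_map, List.length_append, List.length_singleton, List.range_succ,
    List.map_append, List.map_singleton, List.append_cancel_right_eq]
  refine List.map_congr_left fun k hk => ?_
  rw [← prevEncAt_take (List.mem_range.mp hk), List.take_left]

theorem le_of_prevEncAt_eq_inr {T : List (σ ⊕ π)} {k v : ℕ}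
    (h : prevEncAt T k = Sum.inr (v : ℕ∞)) : v ≤ k := by
  unfold prevEncAt at h
  split at h
  · simp at h
  · simp at h
  · split at h
    · simp at h
    · simp only [Sum.inr.injEq, Nat.cast_inj] at h
      omega

theorem le_of_getElem?_prevEnc_eq_inr {T : List (σ ⊕ π)} {k v : ℕ}
    (h : (prevEnc T)[k]? = some (Sum.inr (v : ℕ∞))) : v ≤ k := by
  obtain ⟨hk, hv⟩ := List.getElem?_eq_some_iff.mp h
  rw [getElem_prevEnc] at hv
  exact le_of_prevEncAt_eq_inr hv

theorem prevEncAt_eq_top_iff {T : List (σ ⊕ π)} {k : ℕ} (hk : k < T.length) :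
    prevEncAt T k = Sum.inr ⊤ ↔ ∃ b, T[k] = Sum.inr b ∧ Sum.inr b ∉ T.take k := by
  rw [prevEncAt, List.getElem?_eq_getElem hk]
  rcases T[k] with a | b
  · simp
  · rcases h : T.lastOccBefore k (Sum.inr b) with _ | j
    · simpa [h] using List.lastOccBefore_eq_none_iff.mp h
    · have hmem : Sum.inr b ∈ T.take k := by
        by_contra hn
        simp [List.lastOccBefore_eq_none_iff.mpr hn] at h
      simpa [h] using hmem

theorem count_top_prevEnc (T : List (σ ⊕ π)) :
    (prevEnc T).count (Sum.inr ⊤) = distinctParams T := by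
  induction T using List.reverseRecOn with
  | nil => rfl
  | append_singleton T c ih =>
    have htop : prevEncAt (T ++ [c]) T.length = Sum.inr ⊤ ↔ ∃ b, c = Sum.inr b ∧ Sum.inr b ∉ T := by
      rw [prevEncAt_eq_top_iff (by simp)]
      simp
    rw [prevEnc_append_singleton, List.count_append, ih, List.count_singleton]
    rcases c with a | b
    · simp_all [distinctParams_append_inl]
    · by_cases hb : Sum.inr b ∈ T
      · simp_all [distinctParams_append_inr_of_mem]
      · simp_all [distinctParams_append_inr_of_not_mem]

theorem prevEncAt_cons_succ (c : σ ⊕ π) (U : List (σ ⊕ π)) (k : ℕ) :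
    prevEncAt (c :: U) (k + 1) =
      if U[k]? = some c ∧ c ∉ U.take k ∧ c.isRight then Sum.inr ((k + 1 : ℕ) : ℕ∞)
      else prevEncAt U k := by
  simp only [prevEncAt, List.getElem?_cons_succ, List.lastOccBefore_cons_succ]
  rcases hU : U[k]? with _ | a | b
  · simp
  · by_cases hc : Sum.inl a = c
    · subst hc; simp
    · simp [hc]
  · rcases hl : U.lastOccBefore k (Sum.inr b) with _ | j
    · have hb := List.lastOccBefore_eq_none_iff.mp hl
      by_cases hc : Sum.inr b = c
      · subst hc; simp [hb, hl]
      · simp [hc, Ne.symm hc, hl]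
    · have hb : Sum.inr b ∈ U.take k := by
        by_contra hn
        simp [List.lastOccBefore_eq_none_iff.mpr hn] at hl
      by_cases hc : Sum.inr b = c
      · subst hc; simp [hb, hl]
      · simp [hc, hl]

end PrevEnc

section Bump
variable [DecidableEq σ]

def bumpTop : ℕ → ℕ → List (σ ⊕ ℕ∞) → List (σ ⊕ ℕ∞)
  | _, _, [] => []
  | m, p, x :: xs =>
    if x = Sum.inr ⊤ then
      match m with
      | 0 => Sum.inr ((p + 1 : ℕ) : ℕ∞) :: xs
      | m + 1 => x :: bumpTop m (p + 1) xs
    else x :: bumpTop m (p + 1) xs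

theorem getElem?_bumpTop (m p : ℕ) (X : List (σ ⊕ ℕ∞)) (k : ℕ) :
    (bumpTop m p X)[k]? =
      if X[k]? = some (Sum.inr ⊤) ∧ (X.take k).count (Sum.inr ⊤) = m
      then some (Sum.inr ((p + k + 1 : ℕ) : ℕ∞)) else X[k]? := by
  induction X generalizing m p k with
  | nil => simp [bumpTop]
  | cons x xs ih =>
    rcases k with _ | k
    · by_cases hx : x = Sum.inr ⊤
      · cases m <;> simp [bumpTop, hx]
      · simp [bumpTop, hx]
    · by_cases hx : x = Sum.inr ⊤
      · cases m
        · simp [bumpTop, hx]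
        · simp only [bumpTop, hx, ↓reduceIte, List.getElem?_cons_succ, ih, List.take_succ_cons,
            List.count_cons_self, Nat.add_right_cancel_iff]
          ring_nf
      · simp only [bumpTop, hx, ↓reduceIte, List.getElem?_cons_succ, ih, List.take_succ_cons,
          ne_eq, not_false_eq_true, List.count_cons_of_ne]
        ring_nf

@[simp]
theorem length_bumpTop (m p : ℕ) (X : List (σ ⊕ ℕ∞)) : (bumpTop m p X).length = X.length := by
  induction X generalizing m p with
  | nil => rfl
  | cons x xs ih => cases m <;> by_cases hx : x = Sum.inr ⊤ <;> simp [bumpTop, hx, ih]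

theorem lex_bumpTop [LT σ] {X Y : List (σ ⊕ ℕ∞)} (h : List.Lex pvlt X Y) {m p : ℕ}
    (hX : ∀ (k v : ℕ), X[k]? = some (Sum.inr (v : ℕ∞)) → v ≤ p + k) :
    List.Lex pvlt (bumpTop m p X) (bumpTop m p Y) := by
  induction h generalizing m p with
  | nil => unfold bumpTop; split_ifs <;> (try split) <;> exact .nil
  | @cons x l₁ _ h ih =>
    have hxs : ∀ (k v : ℕ), l₁[k]? = some (Sum.inr (v : ℕ∞)) → v ≤ p + 1 + k := fun k v hv => by
      have := hX (k + 1) v (by simpa using hv)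
      omega
    unfold bumpTop
    split_ifs
    · split
      · exact .cons h
      · exact .cons (ih hxs)
    · exact .cons (ih hxs)
  | @rel x _ y _ hxy =>
    have hx : x ≠ Sum.inr ⊤ := by
      rintro rfl
      cases y <;> simp [pvlt] at hxy
    have hxp : pvlt x (Sum.inr ((p + 1 : ℕ) : ℕ∞)) := by
      rcases x with a | v
      · trivial
      · lift v to ℕ using by simpa using hx
        have := hX 0 v (by simp)
        show (v : ℕ∞) < _
        exact_mod_cast (by omega : v < p + 1)
    simp only [bumpTop, if_neg hx]
    split_ifs
    · split
      · exact .rel hxp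
      · exact .rel hxy
    · exact .rel hxy

end Bump

section Rotate
variable [DecidableEq σ] [DecidableEq π]

def lastCode (U : List (σ ⊕ π)) : σ ⊕ π → σ ⊕ ℕ
  | Sum.inl a => Sum.inl a
  | Sum.inr b => Sum.inr (distinctParams (U.take (U.idxOf (Sum.inr b))) + 1)

/-- The parameter code `m ≥ 1` is one-based, while `bumpTop` counts the `∞`'s from zero. -/
def rotateEnc : σ ⊕ ℕ → List (σ ⊕ ℕ∞) → List (σ ⊕ ℕ∞)
  | Sum.inl a, X => Sum.inl a :: X
  | Sum.inr m, X => Sum.inr ⊤ :: bumpTop (m - 1) 0 X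

theorem getElem?_prevEnc_eq_top_and_count_iff (U : List (σ ⊕ π)) (b : π) {k : ℕ}
    (hk : k < U.length) :
    (prevEnc U)[k]? = some (Sum.inr ⊤) ∧
        ((prevEnc U).take k).count (Sum.inr ⊤) = distinctParams (U.take (U.idxOf (Sum.inr b))) ↔
      U[k]? = some (Sum.inr b) ∧ Sum.inr b ∉ U.take k := by
  have hidx : U.idxOf (Sum.inr b) < (prevEnc U).length →
      (prevEnc U)[U.idxOf (Sum.inr b)]? = some (Sum.inr ⊤) := fun h => by
    rw [length_prevEnc] at h
    rw [getElem?_prevEnc _ h, Option.some_inj, prevEncAt_eq_top_iff h]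
    exact ⟨b, List.getElem_idxOf h, List.not_mem_take_idxOf _ _⟩
  rw [← count_top_prevEnc, prevEnc_take,
    List.getElem?_eq_some_and_count_take_eq_iff hidx (by simpa using hk), eq_comm,
    List.idxOf_eq_iff hk, List.getElem?_eq_getElem hk, Option.some_inj]

theorem prevEnc_cons (c : σ ⊕ π) (U : List (σ ⊕ π)) :
    prevEnc (c :: U) = rotateEnc (lastCode U c) (prevEnc U) := by
  refine List.ext_getElem? fun k => ?_
  rcases k with _ | k
  · rcases c with a | b <;> simp [rotateEnc, lastCode, prevEncAt, List.lastOccBefore]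
  by_cases hk : k < U.length
  · rw [getElem?_prevEnc _ (by simpa using hk), prevEncAt_cons_succ]
    rcases c with a | b
    · simp [rotateEnc, lastCode, getElem?_prevEnc _ hk]
    · simp only [rotateEnc, lastCode, add_tsub_cancel_right, List.getElem?_cons_succ,
        getElem?_bumpTop, getElem?_prevEnc_eq_top_and_count_iff U b hk]
      simp [getElem?_prevEnc _ hk, apply_ite some]
  · rcases c with a | b <;> simp [rotateEnc, lastCode, hk]

theorem distinctParams_take_idxOf_append_singleton (U : List (σ ⊕ π)) (b : π) :
    distinctParams ((U ++ [Sum.inr b]).take ((U ++ [Sum.inr b]).idxOf (Sum.inr b) + 1)) =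
      distinctParams (U.take (U.idxOf (Sum.inr b))) + 1 := by
  have hidx : (U ++ [Sum.inr b]).idxOf (Sum.inr b) = U.idxOf (Sum.inr b) := by
    rw [List.idxOf_append]
    split_ifs with h
    · rfl
    · simp [List.idxOf_eq_length h]
  rw [hidx, List.take_idxOf_add_one_append_singleton,
    distinctParams_append_inr_of_not_mem (List.not_mem_take_idxOf _ _)]

variable [Inhabited σ]

theorem get1_encodeE_append_singleton (U : List (σ ⊕ π)) (c : σ ⊕ π) :
    get1 (encodeE (U ++ [c])) (U.length + 1) = lastCode U c := by
  rcases c with a | b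
  · simp [get1, encodeE, lastCode]
  · simp [get1, encodeE, lastCode, rotR, distinctParams_take_idxOf_append_singleton]

theorem get1_encodeE_cons_one (c : σ ⊕ π) (U : List (σ ⊕ π)) :
    get1 (encodeE (c :: U)) 1 = lastCode U c := by
  rcases c with a | b
  · simp [get1, encodeE, lastCode]
  · simp [get1, encodeE, lastCode, rotR_cons_length,
      distinctParams_take_idxOf_append_singleton]

theorem get1_encodeE_rotR1_one {W : List (σ ⊕ π)} (hW : W ≠ []) :
    get1 (encodeE (rotR1 W)) 1 = get1 (encodeE W) W.length := by
  obtain ⟨U, c, rfl⟩ := W.eq_nil_or_concat'.resolve_left hW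
  rw [rotR1_append_singleton, get1_encodeE_cons_one, List.length_append, List.length_singleton,
    get1_encodeE_append_singleton]

end Rotate

section Monotone
variable [LT σ] [DecidableEq σ] [DecidableEq π]

theorem lex_rotateEnc {X Y : List (σ ⊕ ℕ∞)} (h : List.Lex pvlt X Y) (x : σ ⊕ ℕ)
    (hX : ∀ (k v : ℕ), X[k]? = some (Sum.inr (v : ℕ∞)) → v ≤ k) :
    List.Lex pvlt (rotateEnc x X) (rotateEnc x Y) := by
  rcases x with a | m
  · exact .cons h
  · exact .cons (lex_bumpTop h (by simpa using hX))

theorem lex_or_eq_prevEnc_rotR1 [Inhabited σ] {W W' : List (σ ⊕ π)}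
    (hlen : W.length = W'.length)
    (hlast : get1 (encodeE W) W.length = get1 (encodeE W') W'.length)
    (h : List.Lex pvlt (prevEnc W) (prevEnc W')) :
    List.Lex pvlt (prevEnc (rotR1 W)) (prevEnc (rotR1 W')) ∨
      prevEnc (rotR1 W) = prevEnc (rotR1 W') := by
  rcases W.eq_nil_or_concat' with rfl | ⟨U, c, rfl⟩
  · rw [List.length_nil, eq_comm, List.length_eq_zero_iff] at hlen
    subst hlen
    exact absurd h List.not_lex_nil
  rcases W'.eq_nil_or_concat' with rfl | ⟨U', c', rfl⟩
  · exact absurd h List.not_lex_nil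
  simp only [List.length_append, List.length_singleton, get1_encodeE_append_singleton]
    at hlen hlast
  rw [prevEnc_append_singleton, prevEnc_append_singleton] at h
  rw [rotR1_append_singleton, rotR1_append_singleton, prevEnc_cons, prevEnc_cons, hlast]
  rcases List.Lex.lex_or_eq_of_append_singleton (by simpa using hlen) h with hU | hU
  · exact .inl (lex_rotateEnc hU _ fun _ _ => le_of_getElem?_prevEnc_eq_inr)
  · exact .inr (by rw [hU])

end Monotone

section LFMapping
variable [LinearOrder σ] [DecidableEq π] [Inhabited σ] {T : List (σ ⊕ π)}
  {RA LF : Fin T.length ≃ Fin T.length}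

theorem Farr_LF (hLF : IsLF T RA LF) (i : Fin T.length) : Farr T RA (LF i) = Larr T RA i := by
  have hne : rotR T ((RA i).val + 1) ≠ [] := List.ne_nil_of_length_pos (by simpa using i.pos)
  rw [Farr, ← hLF i]
  exact (get1_encodeE_rotR1_one hne).trans (by rw [length_rotR_s6]; rfl)

theorem LF_lt_LF_of_Larr_eq (hRA : IsRA T RA) (hLF : IsLF T RA LF) {i i' : Fin T.length}
    (hii : i < i') (hL : Larr T RA i = Larr T RA i') : LF i < LF i' := by
  have hrot := lex_or_eq_prevEnc_rotR1 (by simp) (by simpa [Larr] using hL) (hRA i i' hii)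
  rw [show rotR1 _ = _ from hLF i, show rotR1 _ = _ from hLF i'] at hrot
  refine lt_of_not_ge fun hge => ?_
  rcases hge.lt_or_eq with hlt | heq
  · have hrev := hRA _ _ hlt
    rcases hrot with hrot | hrot
    · exact asymm hrot hrev
    · rw [hrot] at hrev
      exact asymm hrev hrev
  · exact hii.ne (LF.injective heq.symm)

theorem card_filter_Farr_eq (hRA : IsRA T RA) (hLF : IsLF T RA LF) (i : Fin T.length) :
    (Finset.univ.filter fun k => k ≤ LF i ∧ Farr T RA k = Larr T RA i).card =
      (Finset.univ.filter fun k => k ≤ i ∧ Larr T RA k = Larr T RA i).card := by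
  have hmono : StrictMonoOn LF {k | Larr T RA k = Larr T RA i} :=
    fun k hk k' hk' hkk' => LF_lt_LF_of_Larr_eq hRA hLF hkk' (hk.trans hk'.symm)
  refine Finset.card_equiv LF.symm fun k => ?_
  obtain ⟨k, rfl⟩ := LF.surjective k
  simp only [Finset.mem_filter, Finset.mem_univ, true_and, Equiv.symm_apply_apply, Farr_LF hLF]
  exact and_congr_left fun hk => hmono.le_iff_le hk rfl

end LFMapping

theorem LF_select_rank_general [LinearOrder σ] [DecidableEq π] [Inhabited σ]
    (T : List (σ ⊕ π))
    (RA : Fin T.length ≃ Fin T.length) (hRA : IsRA T RA)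
    (LF : Fin T.length ≃ Fin T.length) (hLF : IsLF T RA LF) :
    (∀ i : Fin T.length,
        Farr T RA (LF i) = Larr T RA i ∧
        (Finset.univ.filter fun k : Fin T.length =>
            k ≤ LF i ∧ Farr T RA k = Larr T RA i).card
          = (Finset.univ.filter fun k : Fin T.length =>
              k ≤ i ∧ Larr T RA k = Larr T RA i).card) ∧
    (∀ j : Fin T.length,
        Larr T RA (LF.symm j) = Farr T RA j ∧
        (Finset.univ.filter fun k : Fin T.length =>
            k ≤ LF.symm j ∧ Larr T RA k = Farr T RA j).card
          = (Finset.univ.filter fun k : Fin T.length =>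
              k ≤ j ∧ Farr T RA k = Farr T RA j).card) := by
  refine ⟨fun i => ⟨Farr_LF hLF i, card_filter_Farr_eq hRA hLF i⟩, fun j => ?_⟩
  obtain ⟨i, rfl⟩ := LF.surjective j
  rw [Equiv.symm_apply_apply, Farr_LF hLF]
  exact ⟨rfl, (card_filter_Farr_eq hRA hLF i).symm⟩

/-- For every `1 ≤ i ≤ n`, with `x = L_T[i]` and `j = LF_T(i)`:
`F_T[j] = x` and `|F_T[1:j]|_x = |L_T[1:i]|_x`, i.e. `LF_T(i)` is the position of
the `|L_T[1:i]|_x`-th occurrence of `x` in `F_T`; symmetrically, with `y = F_T[j]`,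
`LF_T⁻¹(j)` is the position of the `|F_T[1:j]|_y`-th occurrence of `y` in `L_T`. -/
theorem LF_select_rank [LinearOrder σ] [DecidableEq π] [Inhabited σ]
    (d : σ) (hd : ∀ a : σ, d ≤ a)
    (T : List (σ ⊕ π)) (hT : EndsWith T d)
    (RA : Fin T.length ≃ Fin T.length) (hRA : IsRA T RA)
    (LF : Fin T.length ≃ Fin T.length) (hLF : IsLF T RA LF) :
    (∀ i : Fin T.length,
        Farr T RA (LF i) = Larr T RA i ∧
        (Finset.univ.filter fun k : Fin T.length =>
            k ≤ LF i ∧ Farr T RA k = Larr T RA i).card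
          = (Finset.univ.filter fun k : Fin T.length =>
              k ≤ i ∧ Larr T RA k = Larr T RA i).card) ∧
    (∀ j : Fin T.length,
        Larr T RA (LF.symm j) = Farr T RA j ∧
        (Finset.univ.filter fun k : Fin T.length =>
            k ≤ LF.symm j ∧ Larr T RA k = Farr T RA j).card
          = (Finset.univ.filter fun k : Fin T.length =>
              k ≤ j ∧ Farr T RA k = Farr T RA j).card) :=
  LF_select_rank_general T RA hRA LF hLF
end
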